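/- Assume the block setup and QR setup, suppose F_{j−1}^{(G)} has rank L, let N̂_j† denote the Moore–Penrose pseudoinverse of N̂_j, and let X̃_j^{(F)} := X_{j−1}^{(G)} + W_j·[−R_{j−1}^{−1} Z_j N̂_j† Ĉ_j; N̂_j† Ĉ_j] be the j-th generalized block FOM iterate. Then block GMRES totally stagnates at step j (X_j^{(G)} = X_{j−1}^{(G)}) if and only if X̃_j^{(F)} = X_{j−1}^{(G)}. -/

import Mathlib

open Matrix

noncomputable section

set_option maxHeartbeats 1000000

/-- Squared Frobenius norm of a complex matrix. -/
def frobSq {a b : Type*} [Fintype a] [Fintype b] (M : Matrix a b ℂ) : ℝ :=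
  ∑ r, ∑ c, Complex.normSq (M r c)

/-- The four Moore–Penrose conditions. -/
def IsMoorePenrose {a b : Type*} [Fintype a] [Fintype b]
    (M : Matrix a b ℂ) (P : Matrix b a ℂ) : Prop :=
  M * P * M = M ∧ P * M * P = P ∧ (M * P)ᴴ = M * P ∧ (P * M)ᴴ = P * M

/-- The block Krylov subspace `𝕂_i(A, F)`: the span of all columns of
`F, A F, …, A^(i-1) F`. -/
def blockKrylov {n L : ℕ} (A : Matrix (Fin n) (Fin n) ℂ)
    (F : Matrix (Fin n) (Fin L) ℂ) (i : ℕ) : Submodule ℂ (Fin n → ℂ) :=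
  Submodule.span ℂ { v | ∃ k < i, ∃ c : Fin L, v = fun r => (A ^ k * F) r c }

/-- `E_L^{[mL]}` : the first `L` columns of the `mL × mL` identity matrix
(block row indexing). -/
def EL (m L : ℕ) : Matrix (Fin m × Fin L) (Fin L) ℂ :=
  Matrix.of fun r c => if (r.1 : ℕ) = 0 ∧ r.2 = c then 1 else 0

/-- An `L × L` matrix is upper triangular. -/
def utL {L : ℕ} (M : Matrix (Fin L) (Fin L) ℂ) : Prop :=
  ∀ a b : Fin L, (b : ℕ) < (a : ℕ) → M a b = 0

/-- A block-indexed `mL × mL` matrix is upper triangular. -/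
def utBig {m L : ℕ} (M : Matrix (Fin m × Fin L) (Fin m × Fin L) ℂ) : Prop :=
  ∀ r c : Fin m × Fin L, (c.1 : ℕ) * L + (c.2 : ℕ) < (r.1 : ℕ) * L + (r.2 : ℕ) → M r c = 0

/-- Stack a block-tall matrix on top of an extra block row. -/
def vcat {m L : ℕ} {col : Type*} (T : Matrix (Fin m × Fin L) col ℂ)
    (Bo : Matrix (Fin L) col ℂ) : Matrix (Fin (m+1) × Fin L) col ℂ :=
  Matrix.of fun r cc => if h : (r.1 : ℕ) < m then T (⟨r.1, h⟩, r.2) cc else Bo r.2 cc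

/-- The block matrix `[[R, Z], [0, N]]`. -/
def twoBlock {m L : ℕ} (R : Matrix (Fin m × Fin L) (Fin m × Fin L) ℂ)
    (Z : Matrix (Fin m × Fin L) (Fin L) ℂ) (N : Matrix (Fin L) (Fin L) ℂ) :
    Matrix (Fin (m+1) × Fin L) (Fin (m+1) × Fin L) ℂ :=
  Matrix.of fun r c =>
    if hr : (r.1 : ℕ) < m then
      if hc : (c.1 : ℕ) < m then R (⟨r.1, hr⟩, r.2) (⟨c.1, hc⟩, c.2)
      else Z (⟨r.1, hr⟩, r.2) c.2
    else
      if (c.1 : ℕ) < m then 0 else N r.2 c.2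

/-- The block matrix `[[R, Z], [0, Hmid], [0, Hbot]]`. -/
def threeBlock {m L : ℕ} (R : Matrix (Fin m × Fin L) (Fin m × Fin L) ℂ)
    (Z : Matrix (Fin m × Fin L) (Fin L) ℂ) (Hmid Hbot : Matrix (Fin L) (Fin L) ℂ) :
    Matrix (Fin (m+2) × Fin L) (Fin (m+1) × Fin L) ℂ :=
  Matrix.of fun r c =>
    if hr : (r.1 : ℕ) < m then
      if hc : (c.1 : ℕ) < m then R (⟨r.1, hr⟩, r.2) (⟨c.1, hc⟩, c.2)
      else Z (⟨r.1, hr⟩, r.2) c.2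
    else
      if (c.1 : ℕ) < m then 0
      else if (r.1 : ℕ) = m then Hmid r.2 c.2 else Hbot r.2 c.2

/-- `diag(Q, I_L)` : extend a block-indexed square matrix by an identity block. -/
def extendOne {m L : ℕ} (Q : Matrix (Fin m × Fin L) (Fin m × Fin L) ℂ) :
    Matrix (Fin (m+1) × Fin L) (Fin (m+1) × Fin L) ℂ :=
  Matrix.of fun r c =>
    if hr : (r.1 : ℕ) < m then
      if hc : (c.1 : ℕ) < m then Q (⟨r.1, hr⟩, r.2) (⟨c.1, hc⟩, c.2) else 0
    else
      if (c.1 : ℕ) < m then 0 else if r.2 = c.2 then 1 else 0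

/-- `diag(I_{mL}, Q)` : an identity block, then `Q` in the bottom right corner. -/
def extendBot {m L : ℕ} (Q : Matrix (Fin L) (Fin L) ℂ) :
    Matrix (Fin (m+1) × Fin L) (Fin (m+1) × Fin L) ℂ :=
  Matrix.of fun r c =>
    if (r.1 : ℕ) < m ∨ (c.1 : ℕ) < m then (if r = c then 1 else 0)
    else Q r.2 c.2

/-- The `(m+2)L × (m+2)L` matrix which is the identity outside of its trailing
principal `2L × 2L` block, which is `[[Q11, Q12], [Q21, Q22]]`. -/
def trailingTwo {m L : ℕ} (Q11 Q12 Q21 Q22 : Matrix (Fin L) (Fin L) ℂ) :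
    Matrix (Fin (m+2) × Fin L) (Fin (m+2) × Fin L) ℂ :=
  Matrix.of fun r c =>
    if (r.1 : ℕ) < m ∨ (c.1 : ℕ) < m then (if r = c then 1 else 0)
    else if (r.1 : ℕ) = m then
      (if (c.1 : ℕ) = m then Q11 r.2 c.2 else Q12 r.2 c.2)
    else
      (if (c.1 : ℕ) = m then Q21 r.2 c.2 else Q22 r.2 c.2)

/-- The block matrix `[R ; 0]` (one extra zero block row below `R`). -/
def stackZero {m L : ℕ} (R : Matrix (Fin m × Fin L) (Fin m × Fin L) ℂ) :
    Matrix (Fin (m+1) × Fin L) (Fin m × Fin L) ℂ :=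
  Matrix.of fun r c => if h : (r.1 : ℕ) < m then R (⟨r.1, h⟩, r.2) c else 0

/-- A breakdown-free block Arnoldi decomposition of length `j = p + 1` for the block
linear system `A X = B` with initial guess `X₀` (block size `L`). -/
structure BlockArnoldi (n L p : ℕ) : Type where
  A : Matrix (Fin n) (Fin n) ℂ
  B : Matrix (Fin n) (Fin L) ℂ
  X0 : Matrix (Fin n) (Fin L) ℂ
  W : Matrix (Fin n) (Fin (p+2) × Fin L) ℂ
  S0 : Matrix (Fin L) (Fin L) ℂ
  Hbar : Matrix (Fin (p+2) × Fin L) (Fin (p+1) × Fin L) ℂ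
  hL : 1 ≤ L
  hn : (p+2) * L ≤ n
  F0_rank : (B - A * X0).rank = L
  orth : Wᴴ * W = 1
  S0_ut : utL S0
  S0_inv : IsUnit S0
  F0_eq : B - A * X0 = (W.submatrix id fun c : Fin L => ((0 : Fin (p+2)), c)) * S0
  span : ∀ i : ℕ, i ≤ p + 2 →
    blockKrylov A (B - A * X0) i =
      Submodule.span ℂ { v | ∃ c : Fin (p+2) × Fin L, (c.1 : ℕ) < i ∧ v = fun r => W r c }
  arnoldi : A * W.submatrix id (Prod.map Fin.castSucc id) = W * Hbar
  hess : ∀ r c, (c.1 : ℕ) + 1 < (r.1 : ℕ) → Hbar r c = 0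
  sub_ut : ∀ (k : Fin (p+1)) (a b : Fin L), (b : ℕ) < (a : ℕ) → Hbar (k.succ, a) (k, b) = 0
  sub_inv : ∀ k : Fin (p+1), IsUnit (Matrix.of fun a b : Fin L => Hbar (k.succ, a) (k, b))

namespace BlockArnoldi

variable {n L p : ℕ}

/-- `H̄_{j-1}`, the leading `jL × (j-1)L` submatrix of `H̄_j`. -/
def Hprev (D : BlockArnoldi n L p) : Matrix (Fin (p+1) × Fin L) (Fin p × Fin L) ℂ :=
  D.Hbar.submatrix (Prod.map Fin.castSucc id) (Prod.map Fin.castSucc id)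

/-- `H_j`, the leading `jL × jL` submatrix of `H̄_j`. -/
def Hsq (D : BlockArnoldi n L p) : Matrix (Fin (p+1) × Fin L) (Fin (p+1) × Fin L) ℂ :=
  D.Hbar.submatrix (Prod.map Fin.castSucc id) id

/-- `W_j = [V₁ … V_j]`. -/
def Wfull (D : BlockArnoldi n L p) : Matrix (Fin n) (Fin (p+1) × Fin L) ℂ :=
  D.W.submatrix id (Prod.map Fin.castSucc id)

/-- `W_{j-1} = [V₁ … V_{j-1}]`. -/
def Wprev (D : BlockArnoldi n L p) : Matrix (Fin n) (Fin p × Fin L) ℂ :=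
  D.W.submatrix id (Prod.map (fun i : Fin p => (i.castSucc.castSucc : Fin (p+2))) id)

/-- `V_j`, the `j`-th block Arnoldi vector. -/
def Vj (D : BlockArnoldi n L p) : Matrix (Fin n) (Fin L) ℂ :=
  D.W.submatrix id fun c : Fin L => (((Fin.last p).castSucc : Fin (p+2)), c)

end BlockArnoldi

/-- `Y` is the unique minimizer of `‖Hb • Y' - T‖_F` over all `Y'`. -/
def IsUniqueFrobMin {a b c : Type*} [Fintype a] [Fintype b] [Fintype c]
    (Hb : Matrix a b ℂ) (T : Matrix a c ℂ) (Y : Matrix b c ℂ) : Prop :=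
  (∀ Y', frobSq (Hb * Y - T) ≤ frobSq (Hb * Y' - T)) ∧
  ∀ Y', (∀ Y'', frobSq (Hb * Y' - T) ≤ frobSq (Hb * Y'' - T)) → Y' = Y

/-- `Y_j^{(G)}` is the solution of the `j`-th block GMRES least-squares subproblem. -/
def IsBlockGMRESj {n L p : ℕ} (D : BlockArnoldi n L p)
    (Y : Matrix (Fin (p+1) × Fin L) (Fin L) ℂ) : Prop :=
  IsUniqueFrobMin D.Hbar (EL (p+2) L * D.S0) Y

/-- `Y_{j-1}^{(G)}` is the solution of the `(j-1)`-st block GMRES least-squares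
subproblem. -/
def IsBlockGMRESprev {n L p : ℕ} (D : BlockArnoldi n L p)
    (Y : Matrix (Fin p × Fin L) (Fin L) ℂ) : Prop :=
  IsUniqueFrobMin D.Hprev (EL (p+1) L * D.S0) Y

/-- The QR setup at step `j = p+1` : a QR factorization `Q̄_{j-1} H̄_{j-1} = [R_{j-1}; 0]`
from the previous step, the induced splitting
`diag(Q̄_{j-1}, I_L)·H̄_j = [[R,Z],[0,Ĥ_{jj}],[0,H_{j+1,j}]]`, the unitary `Q_j`
(identity outside its trailing principal `2L×2L` block) completing the
QR factorization of `H̄_j`, and the unitary `Q̂_j^{(b)}` triangularizing `Ĥ_{jj}`. -/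
structure QRSetup (L p : ℕ) (Hbar : Matrix (Fin (p+2) × Fin L) (Fin (p+1) × Fin L) ℂ)
    (S0 : Matrix (Fin L) (Fin L) ℂ) : Type where
  Qbar : Matrix (Fin (p+1) × Fin L) (Fin (p+1) × Fin L) ℂ
  R : Matrix (Fin p × Fin L) (Fin p × Fin L) ℂ
  Z : Matrix (Fin p × Fin L) (Fin L) ℂ
  Hhat : Matrix (Fin L) (Fin L) ℂ
  Hsub : Matrix (Fin L) (Fin L) ℂ
  Q11 : Matrix (Fin L) (Fin L) ℂ
  Q12 : Matrix (Fin L) (Fin L) ℂ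
  Q21 : Matrix (Fin L) (Fin L) ℂ
  Q22 : Matrix (Fin L) (Fin L) ℂ
  N : Matrix (Fin L) (Fin L) ℂ
  Qhatb : Matrix (Fin L) (Fin L) ℂ
  Nhat : Matrix (Fin L) (Fin L) ℂ
  Qbar_unit : Qbarᴴ * Qbar = 1
  Qbar_base : p = 0 → Qbar = 1
  R_ut : utBig R
  R_inv : IsUnit R
  qr_prev : Qbar * Hbar.submatrix (Prod.map Fin.castSucc id) (Prod.map Fin.castSucc id)
      = stackZero R
  qr_split : extendOne Qbar * Hbar = threeBlock R Z Hhat Hsub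
  Qj_unit : (trailingTwo (m := p) Q11 Q12 Q21 Q22)ᴴ * trailingTwo (m := p) Q11 Q12 Q21 Q22 = 1
  qr_full : trailingTwo (m := p) Q11 Q12 Q21 Q22 * (extendOne Qbar * Hbar)
      = threeBlock R Z N 0
  N_ut : utL N
  N_inv : IsUnit N
  Qhatb_unit : Qhatbᴴ * Qhatb = 1
  Nhat_def : Nhat = Qhatb * Hhat
  Nhat_ut : utL Nhat

namespace QRSetup

variable {L p : ℕ} {Hbar : Matrix (Fin (p+2) × Fin L) (Fin (p+1) × Fin L) ℂ}
  {S0 : Matrix (Fin L) (Fin L) ℂ}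

/-- `C̃_j` : the last `L` rows of `Q̄_{j-1} E_L^{[jL]} S₀`. -/
def Ct (S : QRSetup L p Hbar S0) : Matrix (Fin L) (Fin L) ℂ :=
  Matrix.of fun a b => (S.Qbar * (EL (p+1) L * S0)) ((Fin.last p), a) b

/-- `C_j := Q_j^{(11)} C̃_j`. -/
def C (S : QRSetup L p Hbar S0) : Matrix (Fin L) (Fin L) ℂ := S.Q11 * S.Ct

/-- `Ĉ_j := Q̂_j^{(b)} C̃_j`. -/
def Chat (S : QRSetup L p Hbar S0) : Matrix (Fin L) (Fin L) ℂ := S.Qhatb * S.Ct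

end QRSetup

/-!
The unitary `Q̄_j = Q_j diag(Q̄_{j-1}, I_L)` reduces both block GMRES least-squares problems
to triangular systems: writing `Q̄_{j-1} E_L S₀ = [g; C̃_j]`, the minimizers satisfy
`R_{j-1} Y_{j-1}^{(G)} = g` and `R̄_j Y_j^{(G)} = [g; C_j]`, where
`R̄_j = [[R_{j-1}, Z_j], [0, N_j]]`. Hence `X_j^{(G)} = X_{j-1}^{(G)}`, i.e.
`Y_j^{(G)} = [Y_{j-1}^{(G)}; 0]`, exactly when `C_j = 0`. On the other side
`X̃_j^{(F)} = X_{j-1}^{(G)}` exactly when `N̂_j† Ĉ_j = 0`, which by the Moore–Penrose identities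
means `N̂_jᴴ Ĉ_j = 0`. Unitarity of `Q_j` gives `Ĥ_{jj} = Q_j^{(11)ᴴ} N_j`, so
`N̂_jᴴ Ĉ_j = Ĥ_{jj}ᴴ C̃_j = N_jᴴ C_j`, which vanishes iff `C_j = 0` as `N_j` is invertible.
-/

section Frobenius

variable {a b c : Type*} [Fintype a] [Fintype b]

lemma frobSq_nonneg (M : Matrix a b ℂ) : 0 ≤ frobSq M :=
  Finset.sum_nonneg fun _ _ => Finset.sum_nonneg fun _ _ => Complex.normSq_nonneg _

lemma frobSq_eq_zero_iff {M : Matrix a b ℂ} : frobSq M = 0 ↔ M = 0 := by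
  refine ⟨fun h => ?_, fun h => by simp [h, frobSq]⟩
  ext r c
  have hrow := (Finset.sum_eq_zero_iff_of_nonneg fun r _ =>
    Finset.sum_nonneg fun c _ => Complex.normSq_nonneg (M r c)).1 h r (Finset.mem_univ r)
  have hentry := (Finset.sum_eq_zero_iff_of_nonneg fun c _ =>
    Complex.normSq_nonneg (M r c)).1 hrow c (Finset.mem_univ c)
  exact Complex.normSq_eq_zero.1 hentry

lemma frobSq_neg (M : Matrix a b ℂ) : frobSq (-M) = frobSq M := by
  simp [frobSq]

lemma frobSq_submatrix_equiv {a' : Type*} [Fintype a'] (e : a' ≃ a) (M : Matrix a b ℂ) :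
    frobSq (M.submatrix e id) = frobSq M :=
  e.sum_comp fun r => ∑ c, Complex.normSq (M r c)

lemma frobSq_fromRows [Fintype c] (A : Matrix a b ℂ) (B : Matrix c b ℂ) :
    frobSq (fromRows A B) = frobSq A + frobSq B :=
  Fintype.sum_sum_type _

lemma frobSq_eq_re_trace (M : Matrix a b ℂ) : frobSq M = (Mᴴ * M).trace.re := by
  rw [frobSq, Matrix.trace, Finset.sum_comm, Complex.re_sum]
  refine Finset.sum_congr rfl fun c _ => ?_
  rw [Matrix.diag_apply, Matrix.mul_apply, Complex.re_sum]
  refine Finset.sum_congr rfl fun r _ => ?_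
  simp [Complex.normSq_apply]

lemma frobSq_unitary_mul [DecidableEq a] {U : Matrix a a ℂ} (hU : Uᴴ * U = 1)
    (M : Matrix a b ℂ) : frobSq (U * M) = frobSq M := by
  rw [frobSq_eq_re_trace, frobSq_eq_re_trace, Matrix.conjTranspose_mul, Matrix.mul_assoc,
    ← Matrix.mul_assoc Uᴴ, hU, Matrix.one_mul]

end Frobenius

section LeastSquares

variable {r k k' m c : Type*} [Fintype r] [Fintype k] [Fintype k'] [Fintype m]
  [Fintype c] [DecidableEq r]
  {H : Matrix r k' ℂ} {U : Matrix r r ℂ} {M : Matrix k k ℂ}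

lemma frobSq_mul_sub_eq_of_unitary (hU : Uᴴ * U = 1) (e : k ⊕ m ≃ r) (f : k ≃ k')
    (hUH : (U * H).submatrix e f = fromRows M 0) (T : Matrix r c ℂ) (Y : Matrix k' c ℂ) :
    frobSq (H * Y - T) = frobSq (M * Y.submatrix f id - ((U * T).submatrix e id).toRows₁)
      + frobSq ((U * T).submatrix e id).toRows₂ := by
  have hsplit : (U * (H * Y - T)).submatrix e id
      = fromRows (M * Y.submatrix f id - ((U * T).submatrix e id).toRows₁)
          (-((U * T).submatrix e id).toRows₂) := by
    rw [Matrix.mul_sub, ← Matrix.mul_assoc, Matrix.submatrix_sub, Pi.sub_apply, Pi.sub_apply,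
      ← Matrix.submatrix_mul_equiv _ _ _ f, hUH, ← fromRows_toRows ((U * T).submatrix e id)]
    ext (i | i) j <;> simp
  rw [← frobSq_unitary_mul hU, ← frobSq_submatrix_equiv e, hsplit, frobSq_fromRows, frobSq_neg]

lemma mul_submatrix_eq_of_forall_frobSq_le [DecidableEq k] (hU : Uᴴ * U = 1)
    (e : k ⊕ m ≃ r) (f : k ≃ k') (hUH : (U * H).submatrix e f = fromRows M 0)
    (hM : IsUnit M.det) {T : Matrix r c ℂ} {Y : Matrix k' c ℂ}
    (hY : ∀ Y' : Matrix k' c ℂ, frobSq (H * Y - T) ≤ frobSq (H * Y' - T)) :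
    M * Y.submatrix f id = ((U * T).submatrix e id).toRows₁ := by
  set top := ((U * T).submatrix e id).toRows₁
  have hsolve : M * ((M⁻¹ * top).submatrix f.symm id).submatrix f id = top := by
    rw [Matrix.submatrix_submatrix, f.symm_comp_self, Function.comp_id, Matrix.submatrix_id_id,
      Matrix.mul_nonsing_inv_cancel_left M _ hM]
  -- compare with the candidate that solves the square system exactly
  have hmin := hY ((M⁻¹ * top).submatrix f.symm id)
  rw [frobSq_mul_sub_eq_of_unitary hU e f hUH, frobSq_mul_sub_eq_of_unitary hU e f hUH, hsolve,
    sub_self, frobSq_eq_zero_iff.2 rfl] at hmin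
  exact sub_eq_zero.1 <| frobSq_eq_zero_iff.1 <|
    le_antisymm (by linarith) (frobSq_nonneg _)

end LeastSquares

lemma IsMoorePenrose.mul_eq_zero_iff {a b c : Type*} [Fintype a] [Fintype b]
    {M : Matrix a b ℂ} {P : Matrix b a ℂ} (h : IsMoorePenrose M P) (X : Matrix a c ℂ) :
    P * X = 0 ↔ Mᴴ * X = 0 := by
  obtain ⟨hMPM, hPMP, hMP, -⟩ := h
  constructor
  · intro hPX
    rw [← hMPM, Matrix.conjTranspose_mul, hMP]
    simp only [Matrix.mul_assoc, hPX, Matrix.mul_zero]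
  · intro hMX
    rw [← hPMP, Matrix.mul_assoc P M P, ← hMP, Matrix.conjTranspose_mul]
    simp only [Matrix.mul_assoc, hMX, Matrix.mul_zero]

section BlockIndexing

variable {m L : ℕ} {col : Type*}

def lastBlockEquiv (m L : ℕ) : (Fin m × Fin L) ⊕ Fin L ≃ Fin (m + 1) × Fin L where
  toFun := Sum.elim (fun x => (x.1.castSucc, x.2)) fun a => (Fin.last m, a)
  invFun r := if h : (r.1 : ℕ) < m then Sum.inl (⟨r.1, h⟩, r.2) else Sum.inr r.2
  left_inv s := by rcases s with _ | _ <;> simp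
  right_inv r := by
    by_cases h : (r.1 : ℕ) < m
    · simp [h]
    · have hr : r.1 = Fin.last m := Fin.ext (by have := r.1.isLt; simp; omega)
      simp [h, ← hr]

@[simp] lemma lastBlockEquiv_inl (x : Fin m × Fin L) :
    lastBlockEquiv m L (Sum.inl x) = (x.1.castSucc, x.2) := rfl

@[simp] lemma lastBlockEquiv_inr (a : Fin L) :
    lastBlockEquiv m L (Sum.inr a) = (Fin.last m, a) := rfl

def lastTwoBlocksEquiv (m L : ℕ) :
    ((Fin m × Fin L) ⊕ Fin L) ⊕ Fin L ≃ Fin (m + 2) × Fin L :=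
  (Equiv.sumCongr (lastBlockEquiv m L) (Equiv.refl (Fin L))).trans (lastBlockEquiv (m + 1) L)

@[simp] lemma lastTwoBlocksEquiv_inl_inl (x : Fin m × Fin L) :
    lastTwoBlocksEquiv m L (Sum.inl (Sum.inl x)) = (x.1.castSucc.castSucc, x.2) := rfl

@[simp] lemma lastTwoBlocksEquiv_inl_inr (a : Fin L) :
    lastTwoBlocksEquiv m L (Sum.inl (Sum.inr a)) = ((Fin.last m).castSucc, a) := rfl

@[simp] lemma lastTwoBlocksEquiv_inr (a : Fin L) :
    lastTwoBlocksEquiv m L (Sum.inr a) = (Fin.last (m + 1), a) := rfl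

lemma submatrix_lastTwoBlocksEquiv {M : Matrix (Fin (m + 2) × Fin L) col ℂ}
    {A : Matrix (Fin (m + 1) × Fin L) col ℂ} {B : Matrix (Fin L) col ℂ}
    (h : M.submatrix (lastBlockEquiv (m + 1) L) id = fromRows A B) :
    M.submatrix (lastTwoBlocksEquiv m L) id
      = fromRows (A.submatrix (lastBlockEquiv m L) id) B := by
  ext (s | a) c
  · exact congrFun (congrFun h (Sum.inl (lastBlockEquiv m L s))) c
  · exact congrFun (congrFun h (Sum.inr a)) c

lemma vcat_submatrix (T : Matrix (Fin m × Fin L) col ℂ) (B : Matrix (Fin L) col ℂ) :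
    (vcat T B).submatrix (lastBlockEquiv m L) id = fromRows T B := by
  ext (⟨i, a⟩ | a) c <;> simp [vcat]

lemma vcat_eq_zero_iff {T : Matrix (Fin m × Fin L) col ℂ} {B : Matrix (Fin L) col ℂ} :
    vcat T B = 0 ↔ T = 0 ∧ B = 0 := by
  rw [← fromRows_ext_iff, fromRows_zero, ← vcat_submatrix]
  refine ⟨fun h => by rw [h]; rfl, fun h => ?_⟩
  ext r c
  simpa using congrFun (congrFun h ((lastBlockEquiv m L).symm r)) c

lemma stackZero_submatrix (R : Matrix (Fin m × Fin L) (Fin m × Fin L) ℂ) :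
    (stackZero R).submatrix (lastBlockEquiv m L) id = fromRows R 0 := by
  ext (⟨i, a⟩ | a) c <;> simp [stackZero]

lemma EL_submatrix (m L : ℕ) :
    (EL (m + 2) L).submatrix (lastBlockEquiv (m + 1) L) id = fromRows (EL (m + 1) L) 0 := by
  ext (⟨i, a⟩ | a) c <;> simp [EL]

lemma extendOne_submatrix (Q : Matrix (Fin m × Fin L) (Fin m × Fin L) ℂ) :
    (extendOne Q).submatrix (lastBlockEquiv m L) (lastBlockEquiv m L) = fromBlocks Q 0 0 1 := by
  ext (⟨i, a⟩ | a) (⟨j, b⟩ | b) <;> simp [extendOne, Matrix.one_apply]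

lemma extendOne_conjTranspose_mul_self {Q : Matrix (Fin m × Fin L) (Fin m × Fin L) ℂ}
    (hQ : Qᴴ * Q = 1) : (extendOne Q)ᴴ * extendOne Q = 1 := by
  apply (Matrix.reindex (lastBlockEquiv m L).symm (lastBlockEquiv m L).symm).injective
  simp only [Matrix.reindex_apply, Equiv.symm_symm]
  rw [← Matrix.submatrix_mul_equiv _ _ _ (lastBlockEquiv m L), ← Matrix.conjTranspose_submatrix,
    extendOne_submatrix, Matrix.submatrix_one_equiv, Matrix.fromBlocks_conjTranspose,
    Matrix.fromBlocks_multiply]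
  simp [hQ, Matrix.fromBlocks_one]

lemma threeBlock_submatrix (R : Matrix (Fin m × Fin L) (Fin m × Fin L) ℂ)
    (Z : Matrix (Fin m × Fin L) (Fin L) ℂ) (Hmid Hbot : Matrix (Fin L) (Fin L) ℂ) :
    (threeBlock R Z Hmid Hbot).submatrix (lastTwoBlocksEquiv m L) (lastBlockEquiv m L)
      = fromRows (fromBlocks R Z 0 Hmid) (fromCols 0 Hbot) := by
  ext ((⟨i, a⟩ | a) | a) (⟨j, b⟩ | b) <;> simp [threeBlock]

lemma trailingTwo_submatrix (Q11 Q12 Q21 Q22 : Matrix (Fin L) (Fin L) ℂ) :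
    (trailingTwo (m := m) Q11 Q12 Q21 Q22).submatrix (lastTwoBlocksEquiv m L)
        (lastTwoBlocksEquiv m L)
      = fromBlocks (fromBlocks 1 0 0 Q11) (fromRows 0 Q12) (fromCols 0 Q21) Q22 := by
  ext ((⟨i, a⟩ | a) | a) ((⟨j, b⟩ | b) | b) <;>
    simp [trailingTwo, Matrix.one_apply, Prod.ext_iff, Fin.ext_iff] <;> omega

end BlockIndexing

namespace BlockArnoldi

variable {n L p : ℕ} (D : BlockArnoldi n L p)

lemma Wfull_conjTranspose_mul_self : D.Wfullᴴ * D.Wfull = 1 := by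
  have hinj : Function.Injective
      (Prod.map (Fin.castSucc : Fin (p + 1) → Fin (p + 2)) (id : Fin L → Fin L)) :=
    (Fin.castSucc_injective _).prodMap Function.injective_id
  rw [Wfull, Matrix.conjTranspose_submatrix,
    ← Matrix.submatrix_mul _ _ _ _ _ Function.bijective_id, D.orth, Matrix.submatrix_one _ hinj]

lemma Wprev_mul (Y : Matrix (Fin p × Fin L) (Fin L) ℂ) : D.Wprev * Y = D.Wfull * vcat Y 0 := by
  rw [← Matrix.submatrix_id_id (D.Wfull * vcat Y 0),
    ← Matrix.submatrix_mul_equiv _ _ _ (lastBlockEquiv p L), vcat_submatrix,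
    ← fromCols_toCols (D.Wfull.submatrix id _), fromCols_mul_fromRows, Matrix.mul_zero, add_zero]
  rfl

lemma add_Wfull_mul_vcat_eq_self_iff (X : Matrix (Fin n) (Fin L) ℂ)
    {T : Matrix (Fin p × Fin L) (Fin L) ℂ} {B : Matrix (Fin L) (Fin L) ℂ} :
    X + D.Wfull * vcat T B = X ↔ T = 0 ∧ B = 0 := by
  rw [add_eq_left, ← Matrix.mul_zero D.Wfull,
    (mul_right_injective_of_inv _ _ D.Wfull_conjTranspose_mul_self).eq_iff, vcat_eq_zero_iff]

end BlockArnoldi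

namespace QRSetup

section

variable {L p : ℕ} {Hbar : Matrix (Fin (p+2) × Fin L) (Fin (p+1) × Fin L) ℂ}
  {S0 : Matrix (Fin L) (Fin L) ℂ} (S : QRSetup L p Hbar S0)

/-- `g` in `Q̄_{j-1} E_L^{[jL]} S₀ = [g; C̃_j]`. -/
def Ctop : Matrix (Fin p × Fin L) (Fin L) ℂ :=
  ((S.Qbar * (EL (p + 1) L * S0)).submatrix (lastBlockEquiv p L) id).toRows₁

/-- `Q̄_j = Q_j diag(Q̄_{j-1}, I_L)`, the unitary factor of the QR factorization of `H̄_j`. -/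
def QbarSucc : Matrix (Fin (p + 2) × Fin L) (Fin (p + 2) × Fin L) ℂ :=
  trailingTwo (m := p) S.Q11 S.Q12 S.Q21 S.Q22 * extendOne S.Qbar

/-- `R̄_j = [[R_{j-1}, Z_j], [0, N_j]]`. -/
def Rbar : Matrix ((Fin p × Fin L) ⊕ Fin L) ((Fin p × Fin L) ⊕ Fin L) ℂ :=
  fromBlocks S.R S.Z 0 S.N

lemma isUnit_det_Rbar : IsUnit S.Rbar.det := by
  rw [Rbar, Matrix.det_fromBlocks_zero₂₁]
  exact ((Matrix.isUnit_iff_isUnit_det _).1 S.R_inv).mul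
    ((Matrix.isUnit_iff_isUnit_det _).1 S.N_inv)

lemma Qbar_mul_EL_submatrix :
    (S.Qbar * (EL (p + 1) L * S0)).submatrix (lastBlockEquiv p L) id = fromRows S.Ctop S.Ct := by
  rw [← fromRows_toRows ((S.Qbar * (EL (p + 1) L * S0)).submatrix (lastBlockEquiv p L) id)]
  rfl

lemma QbarSucc_conjTranspose_mul_self : S.QbarSuccᴴ * S.QbarSucc = 1 := by
  rw [QbarSucc, Matrix.conjTranspose_mul, Matrix.mul_assoc,
    ← Matrix.mul_assoc (trailingTwo (m := p) S.Q11 S.Q12 S.Q21 S.Q22)ᴴ, S.Qj_unit,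
    Matrix.one_mul, extendOne_conjTranspose_mul_self S.Qbar_unit]

lemma QbarSucc_mul_Hbar_submatrix :
    (S.QbarSucc * Hbar).submatrix (lastTwoBlocksEquiv p L) (lastBlockEquiv p L)
      = fromRows S.Rbar 0 := by
  rw [QbarSucc, Matrix.mul_assoc, S.qr_full, threeBlock_submatrix, fromCols_zero, Rbar]

lemma QbarSucc_mul_EL_submatrix :
    (S.QbarSucc * (EL (p + 2) L * S0)).submatrix (lastTwoBlocksEquiv p L) id
      = fromRows (fromRows S.Ctop S.C) (S.Q21 * S.Ct) := by
  have hext : (extendOne S.Qbar * (EL (p + 2) L * S0)).submatrix (lastBlockEquiv (p + 1) L) id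
      = fromRows (S.Qbar * (EL (p + 1) L * S0)) 0 := by
    rw [← Matrix.submatrix_mul_equiv _ _ _ (lastBlockEquiv (p + 1) L), extendOne_submatrix,
      show (EL (p + 2) L * S0).submatrix (lastBlockEquiv (p + 1) L) id
        = (EL (p + 2) L).submatrix (lastBlockEquiv (p + 1) L) id * S0 from rfl,
      EL_submatrix, fromRows_mul, fromBlocks_mul_fromRows]
    simp
  rw [QbarSucc, Matrix.mul_assoc, ← Matrix.submatrix_mul_equiv _ _ _ (lastTwoBlocksEquiv p L),
    trailingTwo_submatrix, submatrix_lastTwoBlocksEquiv hext, S.Qbar_mul_EL_submatrix,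
    fromBlocks_mul_fromRows, fromBlocks_mul_fromRows, fromCols_mul_fromRows]
  simp [C]

lemma Hhat_eq : S.Hhat = S.Q11ᴴ * S.N := by
  have hHhat : threeBlock S.R S.Z S.Hhat S.Hsub
      = (trailingTwo (m := p) S.Q11 S.Q12 S.Q21 S.Q22)ᴴ * threeBlock S.R S.Z S.N 0 := by
    rw [← S.qr_full, ← Matrix.mul_assoc, S.Qj_unit, Matrix.one_mul, S.qr_split]
  have hblocks := congrArg
    (fun M => (M.submatrix (lastTwoBlocksEquiv p L) (lastBlockEquiv p L)).toRows₁.toBlocks₂₂)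
    hHhat
  simp only [threeBlock_submatrix] at hblocks
  rw [← Matrix.submatrix_mul_equiv _ _ _ (lastTwoBlocksEquiv p L),
    ← Matrix.conjTranspose_submatrix, trailingTwo_submatrix, threeBlock_submatrix] at hblocks
  simpa [Matrix.fromBlocks_conjTranspose, fromBlocks_mul_fromRows, Matrix.fromBlocks_multiply]
    using hblocks

lemma Nhat_conjTranspose_mul_Chat : S.Nhatᴴ * S.Chat = S.Nᴴ * S.C := by
  rw [S.Nhat_def, Chat, C, S.Hhat_eq, Matrix.conjTranspose_mul, Matrix.conjTranspose_mul,
    Matrix.conjTranspose_conjTranspose, Matrix.mul_assoc, ← Matrix.mul_assoc S.Qhatbᴴ,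
    S.Qhatb_unit, Matrix.one_mul, Matrix.mul_assoc]

lemma C_eq_zero_iff {Nhd : Matrix (Fin L) (Fin L) ℂ} (hNhd : IsMoorePenrose S.Nhat Nhd) :
    S.C = 0 ↔ Nhd * S.Chat = 0 := by
  have hN : IsUnit S.Nᴴ.det := by
    rw [Matrix.det_conjTranspose]
    exact ((Matrix.isUnit_iff_isUnit_det _).1 S.N_inv).star
  rw [hNhd.mul_eq_zero_iff, S.Nhat_conjTranspose_mul_Chat,
    (mul_right_injective_of_inv _ _ (Matrix.nonsing_inv_mul _ hN)).eq_iff' (Matrix.mul_zero _)]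

end

variable {n L p : ℕ} {D : BlockArnoldi n L p} (S : QRSetup L p D.Hbar D.S0)

lemma R_mul_eq_Ctop {Y : Matrix (Fin p × Fin L) (Fin L) ℂ} (hY : IsBlockGMRESprev D Y) :
    S.R * Y = S.Ctop := by
  have hRH :
      (S.Qbar * D.Hprev).submatrix (lastBlockEquiv p L) (Equiv.refl _) = fromRows S.R 0 := by
    rw [BlockArnoldi.Hprev, S.qr_prev, Equiv.coe_refl, stackZero_submatrix]
  have hsol := mul_submatrix_eq_of_forall_frobSq_le S.Qbar_unit (lastBlockEquiv p L)
    (Equiv.refl _) hRH ((Matrix.isUnit_iff_isUnit_det _).1 S.R_inv) hY.1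
  rwa [Equiv.coe_refl, Matrix.submatrix_id_id] at hsol

lemma Rbar_mul_eq {Y : Matrix (Fin (p + 1) × Fin L) (Fin L) ℂ} (hY : IsBlockGMRESj D Y) :
    S.Rbar * Y.submatrix (lastBlockEquiv p L) id = fromRows S.Ctop S.C := by
  have hsol := mul_submatrix_eq_of_forall_frobSq_le S.QbarSucc_conjTranspose_mul_self
    (lastTwoBlocksEquiv p L) (lastBlockEquiv p L) S.QbarSucc_mul_Hbar_submatrix
    S.isUnit_det_Rbar hY.1
  rwa [S.QbarSucc_mul_EL_submatrix, toRows₁_fromRows] at hsol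

lemma gmres_stagnates_iff {Yj : Matrix (Fin (p + 1) × Fin L) (Fin L) ℂ}
    (hYj : IsBlockGMRESj D Yj) {Yprev : Matrix (Fin p × Fin L) (Fin L) ℂ} (hYprev : IsBlockGMRESprev D Yprev) :
    D.X0 + D.Wfull * Yj = D.X0 + D.Wprev * Yprev ↔ S.C = 0 := by
  have hRbar : Function.Injective fun Y : Matrix (Fin (p + 1) × Fin L) (Fin L) ℂ =>
      S.Rbar * Y.submatrix (lastBlockEquiv p L) id :=
    (mul_right_injective_of_inv _ _ (Matrix.nonsing_inv_mul _ S.isUnit_det_Rbar)).comp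
      (Matrix.reindex (lastBlockEquiv p L).symm (Equiv.refl _)).injective
  calc D.X0 + D.Wfull * Yj = D.X0 + D.Wprev * Yprev ↔ Yj = vcat Yprev 0 := by
        rw [add_right_inj, D.Wprev_mul]
        exact (mul_right_injective_of_inv _ _ D.Wfull_conjTranspose_mul_self).eq_iff
    _ ↔ fromRows S.Ctop S.C = fromRows S.Ctop 0 := by
        rw [← hRbar.eq_iff, S.Rbar_mul_eq hYj, vcat_submatrix, Rbar, fromBlocks_mul_fromRows,
          S.R_mul_eq_Ctop hYprev]
        simp
    _ ↔ S.C = 0 := by rw [fromRows_ext_iff]; simp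

end QRSetup

theorem stmt14_general {n L p : ℕ} (D : BlockArnoldi n L p) (S : QRSetup L p D.Hbar D.S0)
    (Yj : Matrix (Fin (p+1) × Fin L) (Fin L) ℂ) (hYj : IsBlockGMRESj D Yj)
    (Yprev : Matrix (Fin p × Fin L) (Fin L) ℂ) (hYprev : IsBlockGMRESprev D Yprev)
    (Nhd : Matrix (Fin L) (Fin L) ℂ) (hNhd : IsMoorePenrose S.Nhat Nhd) :
    ∀ Xf : Matrix (Fin n) (Fin L) ℂ,
      Xf = (D.X0 + D.Wprev * Yprev)
            + D.Wfull * vcat (-(S.R⁻¹ * S.Z * (Nhd * S.Chat))) (Nhd * S.Chat) →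
    (D.X0 + D.Wfull * Yj = D.X0 + D.Wprev * Yprev ↔ Xf = D.X0 + D.Wprev * Yprev) := by
  rintro Xf rfl
  rw [S.gmres_stagnates_iff hYj hYprev, S.C_eq_zero_iff hNhd,
    D.add_Wfull_mul_vcat_eq_self_iff]
  exact ⟨fun h => ⟨by rw [h, Matrix.mul_zero, neg_zero], h⟩, And.right⟩

/-- Block GMRES totally stagnates at step `j`
(`X_j^(G) = X_{j-1}^(G)`) if and only if the generalized block FOM iterate satisfies
`X̃_j^(F) = X_{j-1}^(G)`. -/
theorem stmt14 {n L p : ℕ} (D : BlockArnoldi n L p) (S : QRSetup L p D.Hbar D.S0)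
    (Yj : Matrix (Fin (p+1) × Fin L) (Fin L) ℂ) (hYj : IsBlockGMRESj D Yj)
    (Yprev : Matrix (Fin p × Fin L) (Fin L) ℂ) (hYprev : IsBlockGMRESprev D Yprev)
    (hF : (D.B - D.A * (D.X0 + D.Wprev * Yprev)).rank = L)
    (Nhd : Matrix (Fin L) (Fin L) ℂ) (hNhd : IsMoorePenrose S.Nhat Nhd) :
    ∀ Xf : Matrix (Fin n) (Fin L) ℂ,
      Xf = (D.X0 + D.Wprev * Yprev)
            + D.Wfull * vcat (-(S.R⁻¹ * S.Z * (Nhd * S.Chat))) (Nhd * S.Chat) →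
    (D.X0 + D.Wfull * Yj = D.X0 + D.Wprev * Yprev ↔ Xf = D.X0 + D.Wprev * Yprev) :=
  stmt14_general D S Yj hYj Yprev hYprev Nhd hNhd

end
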